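/- Let H and K be real inner product spaces, let X_r ⊆ H be a finite-dimensional subspace with orthonormal basis φ_1, …, φ_r, let P : H → X_r be the orthogonal projection onto X_r, and let D : H → K be a linear map. Let S be the r×r real matrix with entries S_{ij} = ⟨D φ_j, D φ_i⟩_K and let ‖S‖₂ denote its operator norm induced by the Euclidean norm on ℝ^r. Then for all u, w ∈ H, ‖D(u − P u)‖_K ≤ ‖D(u − w)‖_K + ‖D(w − P w)‖_K + sqrt(‖S‖₂)·‖u − w‖_H. -/

import Mathlib

/-!
Write `u - P u = (u - w) + (w - P w) + (P w - P u)` and apply the triangle inequality after `D`.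
The last term lies in `Xr`, where the inverse estimate `‖D v‖ ≤ sqrt ‖S‖₂ ‖v‖` holds because
`S` is the Gram matrix of `D φ`, so `‖D (∑ cᵢ φᵢ)‖² = cᵀ S c ≤ ‖S‖₂ ‖c‖²`, while `‖∑ cᵢ φᵢ‖ = ‖c‖`
by orthonormality. Finally `‖P w - P u‖ ≤ ‖w - u‖` by Pythagoras, as `(w - u) - (P w - P u)` is
orthogonal to `Xr`.
-/

open scoped RealInnerProductSpace

section Gram

variable {ι E : Type*} [Fintype ι] [DecidableEq ι] [NormedAddCommGroup E] [InnerProductSpace ℝ E]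

theorem norm_sum_smul_sq_eq_inner_toEuclideanCLM_gram (v : ι → E) (c : ι → ℝ) :
    ‖∑ i, c i • v i‖ ^ 2 =
      ⟪WithLp.toLp 2 c, Matrix.toEuclideanCLM (𝕜 := ℝ) (Matrix.gram ℝ v) (WithLp.toLp 2 c)⟫ := by
  rw [Matrix.inner_toEuclideanCLM, ← real_inner_self_eq_norm_sq,
    ← Matrix.star_dotProduct_gram_mulVec, star_trivial]

theorem norm_sum_smul_le_sqrt_norm_gram_mul (v : ι → E) (c : ι → ℝ) :
    ‖∑ i, c i • v i‖ ≤
      Real.sqrt ‖Matrix.toEuclideanCLM (𝕜 := ℝ) (Matrix.gram ℝ v)‖ * ‖WithLp.toLp 2 c‖ := by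
  set x : EuclideanSpace ℝ ι := WithLp.toLp 2 c
  set G := Matrix.toEuclideanCLM (𝕜 := ℝ) (Matrix.gram ℝ v)
  have hsq : ‖∑ i, c i • v i‖ ^ 2 ≤ ‖G‖ * ‖x‖ ^ 2 :=
    calc ‖∑ i, c i • v i‖ ^ 2 = ⟪x, G x⟫ := norm_sum_smul_sq_eq_inner_toEuclideanCLM_gram v c
      _ ≤ ‖x‖ * ‖G x‖ := real_inner_le_norm _ _
      _ ≤ ‖x‖ * (‖G‖ * ‖x‖) := by gcongr; exact G.le_opNorm x
      _ = ‖G‖ * ‖x‖ ^ 2 := by ring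
  rw [← Real.sqrt_sq (norm_nonneg (∑ i, c i • v i)), ← Real.sqrt_sq (norm_nonneg x),
    ← Real.sqrt_mul (norm_nonneg G)]
  exact Real.sqrt_le_sqrt hsq

theorem Orthonormal.norm_sum_smul {v : ι → E} (hv : Orthonormal ℝ v)
    (c : ι → ℝ) : ‖∑ i, c i • v i‖ = ‖WithLp.toLp 2 c‖ := by
  have hsq := norm_sum_smul_sq_eq_inner_toEuclideanCLM_gram v c
  rw [Matrix.gram_eq_one_iff_orthonormal.mpr hv, map_one,
    one_apply_eq_self, real_inner_self_eq_norm_sq] at hsq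
  exact (sq_eq_sq₀ (norm_nonneg _) (norm_nonneg _)).mp hsq

end Gram

theorem Orthonormal.norm_map_le_sqrt_norm_gram_mul {ι E F : Type*} [Fintype ι] [DecidableEq ι]
    [NormedAddCommGroup E] [InnerProductSpace ℝ E] [NormedAddCommGroup F] [InnerProductSpace ℝ F]
    {φ : ι → E} (hφ : Orthonormal ℝ φ) (D : E →ₗ[ℝ] F) {v : E}
    (hv : v ∈ Submodule.span ℝ (Set.range φ)) :
    ‖D v‖ ≤ Real.sqrt ‖Matrix.toEuclideanCLM (𝕜 := ℝ) (Matrix.gram ℝ (D ∘ φ))‖ * ‖v‖ := by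
  obtain ⟨c, rfl⟩ := (Submodule.mem_span_range_iff_exists_fun ℝ).mp hv
  rw [map_sum, hφ.norm_sum_smul]
  simp only [map_smul]
  exact norm_sum_smul_le_sqrt_norm_gram_mul (D ∘ φ) c

theorem norm_le_of_mem_of_forall_inner_sub_eq_zero {E : Type*} [NormedAddCommGroup E]
    [InnerProductSpace ℝ E] {K : Submodule ℝ E} {x v : E} (hv : v ∈ K)
    (horth : ∀ y ∈ K, ⟪x - v, y⟫ = 0) : ‖v‖ ≤ ‖x‖ := by
  have hpyth := norm_add_sq_eq_norm_sq_add_norm_sq_real (horth v hv)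
  rw [sub_add_cancel] at hpyth
  nlinarith [mul_self_nonneg ‖x - v‖, norm_nonneg v, norm_nonneg x]

/-- **Decomposition underlying the `H¹`-seminorm ROM projection error bound.**
Let `H`, `K` be real inner product spaces, `φ 0, …, φ (r-1)` an orthonormal family in `H`
spanning the subspace `Xr`, `P : H → H` the orthogonal projection onto `Xr`
(characterized by `P u ∈ Xr` and `⟪u − P u, v⟫ = 0` for all `v ∈ Xr`),
`D : H → K` a linear map, and `S` the `r × r` matrix with `S i j = ⟪D (φ j), D (φ i)⟫`,
with `‖S‖₂` its operator norm induced by the Euclidean norm on `ℝ^r`.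
Then for all `u, w ∈ H`,
`‖D (u − P u)‖ ≤ ‖D (u − w)‖ + ‖D (w − P w)‖ + sqrt(‖S‖₂) ‖u − w‖`. -/
theorem rom_projection_error_decomposition
    {H K : Type*} [NormedAddCommGroup H] [InnerProductSpace ℝ H]
    [NormedAddCommGroup K] [InnerProductSpace ℝ K]
    (r : ℕ) (φ : Fin r → H) (hφ : Orthonormal ℝ φ)
    (Xr : Submodule ℝ H) (hXr : Xr = Submodule.span ℝ (Set.range φ))
    (P : H → H)
    (hPmem : ∀ u : H, P u ∈ Xr)
    (hPorth : ∀ u : H, ∀ v ∈ Xr, ⟪u - P u, v⟫ = 0)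
    (D : H →ₗ[ℝ] K)
    (S : Matrix (Fin r) (Fin r) ℝ)
    (hS : ∀ i j, S i j = ⟪D (φ j), D (φ i)⟫)
    (u w : H) :
    ‖D (u - P u)‖ ≤ ‖D (u - w)‖ + ‖D (w - P w)‖
        + Real.sqrt ‖Matrix.toEuclideanCLM (𝕜 := ℝ) S‖ * ‖u - w‖ := by
  have hS_gram : S = Matrix.gram ℝ (D ∘ φ) := by
    ext i j
    rw [hS, Matrix.gram_apply, real_inner_comm, Function.comp_apply, Function.comp_apply]
  have hmem : P w - P u ∈ Xr := sub_mem (hPmem w) (hPmem u)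
  have hcontr : ‖P w - P u‖ ≤ ‖w - u‖ :=
    norm_le_of_mem_of_forall_inner_sub_eq_zero hmem fun v hv => by
      rw [show w - u - (P w - P u) = (w - P w) - (u - P u) by abel, inner_sub_left,
        hPorth w v hv, hPorth u v hv, sub_zero]
  have hinverse :
      ‖D (P w - P u)‖ ≤ Real.sqrt ‖Matrix.toEuclideanCLM (𝕜 := ℝ) S‖ * ‖P w - P u‖ := by
    rw [hS_gram]
    exact hφ.norm_map_le_sqrt_norm_gram_mul D (hXr ▸ hmem)
  calc ‖D (u - P u)‖ = ‖D (u - w) + D (w - P w) + D (P w - P u)‖ := by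
        rw [← map_add, ← map_add]; congr 2; abel
    _ ≤ ‖D (u - w)‖ + ‖D (w - P w)‖ + ‖D (P w - P u)‖ := norm_add₃_le
    _ ≤ ‖D (u - w)‖ + ‖D (w - P w)‖
          + Real.sqrt ‖Matrix.toEuclideanCLM (𝕜 := ℝ) S‖ * ‖u - w‖ := by
        rw [← norm_sub_rev w u]
        gcongr
        exact hinverse.trans (mul_le_mul_of_nonneg_left hcontr (Real.sqrt_nonneg _))
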